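/- arXiv:1503.03779 — 4 statements merged into one kernel-verified Lean document; each statement's English description precedes it below -/
import Mathlib

section
/- Let A : ℝ → Mat_{n,m}(ℂ) and B : ℝ → Mat_{m,n}(ℂ) be differentiable and satisfy the BHT equations A' = (1/2)(ABB* − B*BA), B' = (1/2)(A*AB − BAA*). Define T₁ = (1/(2i))(AA* − B*B) and define T₂, T₃ as the skew-Hermitian matrices with T₂ + iT₃ = AB. Then T₁, T₂, T₃ satisfy Nahm's equations: T₁' = [T₂,T₃], T₂' = [T₃,T₁], T₃' = [T₁,T₂]. -/
open Matrix

attribute [local instance] Matrix.normedAddCommGroup Matrix.normedSpace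

noncomputable def T1 {n m : ℕ} (A : ℝ → Matrix (Fin n) (Fin m) ℂ)
    (B : ℝ → Matrix (Fin m) (Fin n) ℂ) (t : ℝ) : Matrix (Fin n) (Fin n) ℂ :=
  (1 / (2 * Complex.I)) • (A t * (A t)ᴴ - (B t)ᴴ * B t)

noncomputable def T2 {n m : ℕ} (A : ℝ → Matrix (Fin n) (Fin m) ℂ)
    (B : ℝ → Matrix (Fin m) (Fin n) ℂ) (t : ℝ) : Matrix (Fin n) (Fin n) ℂ :=
  (1 / 2 : ℂ) • (A t * B t - (A t * B t)ᴴ)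

noncomputable def T3 {n m : ℕ} (A : ℝ → Matrix (Fin n) (Fin m) ℂ)
    (B : ℝ → Matrix (Fin m) (Fin n) ℂ) (t : ℝ) : Matrix (Fin n) (Fin n) ℂ :=
  (1 / (2 * Complex.I)) • (A t * B t + (A t * B t)ᴴ)

theorem hasDerivAt_matrix {p q : Type*} [Fintype p] [Fintype q]
    {f : ℝ → Matrix p q ℂ} {f' : Matrix p q ℂ} {t : ℝ} :
    HasDerivAt f f' t ↔ ∀ i j, HasDerivAt (fun t => f t i j) (f' i j) t := by
  exact (hasDerivAt_pi (φ := fun t i => f t i) (φ' := fun i => f' i)).trans (forall_congr' fun i => hasDerivAt_pi)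

theorem HasDerivAt.matrixMul {p q r : Type*} [Fintype p] [Fintype q] [Fintype r]
    {f : ℝ → Matrix p q ℂ} {g : ℝ → Matrix q r ℂ} {f' g'} {t : ℝ}
    (hf : HasDerivAt f f' t) (hg : HasDerivAt g g' t) :
    HasDerivAt (fun t => f t * g t) (f' * g t + f t * g') t := by
  rw [hasDerivAt_matrix] at hf hg ⊢
  intro i j
  simp only [Matrix.mul_apply, Matrix.add_apply, ← Finset.sum_add_distrib]
  exact HasDerivAt.fun_sum fun k _ => (hf i k).mul (hg k j)

theorem HasDerivAt.matrixConjTranspose {p q : Type*} [Fintype p] [Fintype q]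
    {f : ℝ → Matrix p q ℂ} {f'} {t : ℝ} (hf : HasDerivAt f f' t) :
    HasDerivAt (fun t => (f t)ᴴ) f'ᴴ t := by
  rw [hasDerivAt_matrix] at hf ⊢
  intro i j
  simpa only [Matrix.conjTranspose_apply] using (hf j i).star

/-- Solutions of the BHT equations give solutions of Nahm's equations via the
hyperkähler moment map `T₁ = (1/2i)(AA* − B*B)`, `T₂ + iT₃ = AB`. -/
theorem bht_implies_nahm (n m : ℕ)
    (A : ℝ → Matrix (Fin n) (Fin m) ℂ) (B : ℝ → Matrix (Fin m) (Fin n) ℂ)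
    (hA : ∀ t, HasDerivAt A ((1 / 2 : ℂ) •
      (A t * B t * (B t)ᴴ - (B t)ᴴ * B t * A t)) t)
    (hB : ∀ t, HasDerivAt B ((1 / 2 : ℂ) •
      ((A t)ᴴ * A t * B t - B t * A t * (A t)ᴴ)) t) :
    (∀ t, HasDerivAt (T1 A B) (T2 A B t * T3 A B t - T3 A B t * T2 A B t) t)
    ∧ (∀ t, HasDerivAt (T2 A B) (T3 A B t * T1 A B t - T1 A B t * T3 A B t) t)
    ∧ (∀ t, HasDerivAt (T3 A B) (T1 A B t * T2 A B t - T2 A B t * T1 A B t) t) := by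
  refine ⟨fun t => ?_, fun t => ?_, fun t => ?_⟩
  · have h1 : HasDerivAt (T1 A B) ((1 / (2 * Complex.I)) •
        (((1 / 2 : ℂ) • (A t * B t * (B t)ᴴ - (B t)ᴴ * B t * A t)) * (A t)ᴴ
          + A t * ((1 / 2 : ℂ) • (A t * B t * (B t)ᴴ - (B t)ᴴ * B t * A t))ᴴ
          - (((1 / 2 : ℂ) • ((A t)ᴴ * A t * B t - B t * A t * (A t)ᴴ))ᴴ * B t
          + (B t)ᴴ * ((1 / 2 : ℂ) • ((A t)ᴴ * A t * B t - B t * A t * (A t)ᴴ))))) t :=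
      (((hA t).matrixMul (hA t).matrixConjTranspose).sub
        ((hB t).matrixConjTranspose.matrixMul (hB t))).fun_const_smul _
    convert h1 using 1
    simp only [T1, T2, T3, conjTranspose_smul, conjTranspose_sub, conjTranspose_add,
      conjTranspose_mul, conjTranspose_conjTranspose, Complex.star_def, map_div₀,
      _root_.map_one, map_ofNat, one_div, _root_.mul_inv_rev, Complex.inv_I,
      _root_.map_mul, Complex.conj_I, map_inv₀, smul_sub, smul_add, Matrix.sub_mul,
      Matrix.mul_sub, Matrix.add_mul, Matrix.mul_add, Matrix.mul_smul, Matrix.smul_mul,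
      smul_smul, Matrix.mul_assoc]
    match_scalars <;> (try simp only [Complex.conj_ofNat]) <;> ring_nf <;>
      (try rw [Complex.I_sq]) <;> ring
  · have h2 : HasDerivAt (T2 A B) ((1 / 2 : ℂ) •
        ((((1 / 2 : ℂ) • (A t * B t * (B t)ᴴ - (B t)ᴴ * B t * A t)) * B t
          + A t * ((1 / 2 : ℂ) • ((A t)ᴴ * A t * B t - B t * A t * (A t)ᴴ)))
          - (((1 / 2 : ℂ) • (A t * B t * (B t)ᴴ - (B t)ᴴ * B t * A t)) * B t
          + A t * ((1 / 2 : ℂ) • ((A t)ᴴ * A t * B t - B t * A t * (A t)ᴴ)))ᴴ)) t :=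
      (((hA t).matrixMul (hB t)).sub
        ((hA t).matrixMul (hB t)).matrixConjTranspose).fun_const_smul _
    convert h2 using 1
    simp only [T1, T2, T3, conjTranspose_smul, conjTranspose_sub, conjTranspose_add,
      conjTranspose_mul, conjTranspose_conjTranspose, Complex.star_def, map_div₀,
      _root_.map_one, map_ofNat, one_div, _root_.mul_inv_rev, Complex.inv_I,
      _root_.map_mul, Complex.conj_I, map_inv₀, smul_sub, smul_add, Matrix.sub_mul,
      Matrix.mul_sub, Matrix.add_mul, Matrix.mul_add, Matrix.mul_smul, Matrix.smul_mul,
      smul_smul, Matrix.mul_assoc]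
    match_scalars <;> (try simp only [Complex.conj_ofNat]) <;> ring_nf <;>
      (try rw [Complex.I_sq]) <;> ring
  · have h3 : HasDerivAt (T3 A B) ((1 / (2 * Complex.I)) •
        ((((1 / 2 : ℂ) • (A t * B t * (B t)ᴴ - (B t)ᴴ * B t * A t)) * B t
          + A t * ((1 / 2 : ℂ) • ((A t)ᴴ * A t * B t - B t * A t * (A t)ᴴ)))
          + (((1 / 2 : ℂ) • (A t * B t * (B t)ᴴ - (B t)ᴴ * B t * A t)) * B t
          + A t * ((1 / 2 : ℂ) • ((A t)ᴴ * A t * B t - B t * A t * (A t)ᴴ)))ᴴ)) t :=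
      (((hA t).matrixMul (hB t)).add
        ((hA t).matrixMul (hB t)).matrixConjTranspose).fun_const_smul _
    convert h3 using 1
    simp only [T1, T2, T3, conjTranspose_smul, conjTranspose_sub, conjTranspose_add,
      conjTranspose_mul, conjTranspose_conjTranspose, Complex.star_def, map_div₀,
      _root_.map_one, map_ofNat, one_div, _root_.mul_inv_rev, Complex.inv_I,
      _root_.map_mul, Complex.conj_I, map_inv₀, smul_sub, smul_add, Matrix.sub_mul,
      Matrix.mul_sub, Matrix.add_mul, Matrix.mul_add, Matrix.mul_smul, Matrix.smul_mul,
      smul_smul, Matrix.mul_assoc]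
    match_scalars <;> (try simp only [Complex.conj_ofNat]) <;> ring_nf <;>
      (try rw [Complex.I_sq]) <;> ring
end

section
/- Let A₀, A₁ : ℝ → Mat_{n,m}(ℂ), B₀, B₁ : ℝ → Mat_{m,n}(ℂ) be differentiable and satisfy the system A₀' = (1/2)(A₁B₀A₀ − A₀B₀A₁), A₁' = (1/2)(A₁B₁A₀ − A₀B₁A₁), B₀' = (1/2)(B₁A₀B₀ − B₀A₀B₁), B₁' = (1/2)(B₁A₁B₀ − B₀A₁B₁). Then for every ζ ∈ ℂ, Z(ζ) = (A₀+A₁ζ)(B₀+B₁ζ) satisfies the Lax equation Z' = [Z_#, Z] where Z_# = (1/2)(A₀B₁ + A₁B₀) + A₁B₁ζ. -/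
open Matrix

attribute [local instance] Matrix.normedAddCommGroup Matrix.normedSpace

theorem HasDerivAt.matrix_mul {𝕜 R l m n : Type*} [NontriviallyNormedField 𝕜] [CompleteSpace 𝕜]
    [NormedRing R] [NormedAlgebra 𝕜 R] [FiniteDimensional 𝕜 R]
    [Fintype l] [Fintype m] [Fintype n]
    {A : 𝕜 → Matrix l m R} {B : 𝕜 → Matrix m n R} {A' : Matrix l m R} {B' : Matrix m n R}
    {t : 𝕜} (hA : HasDerivAt A A' t) (hB : HasDerivAt B B' t) :
    HasDerivAt (fun s => A s * B s) (A' * B t + A t * B') t := by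
  rw [add_comm]
  exact (mulLinearMap (l := l) (n := n) 𝕜).toContinuousBilinearMap.hasDerivAt_of_bilinear
    (fun _ => hA) (fun _ => hB)

theorem system2nd_leibniz_eq_lax_commutator {K l m : Type*} [Field K] [CharZero K]
    [Fintype l] [Fintype m] (A₀ A₁ : Matrix l m K) (B₀ B₁ : Matrix m l K) (ζ : K) :
    ((1 / 2 : K) • (A₁ * B₀ * A₀ - A₀ * B₀ * A₁)
        + ζ • ((1 / 2 : K) • (A₁ * B₁ * A₀ - A₀ * B₁ * A₁))) * (B₀ + ζ • B₁)
      + (A₀ + ζ • A₁) * ((1 / 2 : K) • (B₁ * A₀ * B₀ - B₀ * A₀ * B₁)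
        + ζ • ((1 / 2 : K) • (B₁ * A₁ * B₀ - B₀ * A₁ * B₁)))
    = ((1 / 2 : K) • (A₀ * B₁ + A₁ * B₀) + ζ • (A₁ * B₁)) * ((A₀ + ζ • A₁) * (B₀ + ζ • B₁))
      - ((A₀ + ζ • A₁) * (B₀ + ζ • B₁)) * ((1 / 2 : K) • (A₀ * B₁ + A₁ * B₀) + ζ • (A₁ * B₁)) := by
  simp only [Matrix.add_mul, Matrix.mul_add, Matrix.sub_mul, Matrix.mul_sub, Matrix.smul_mul,
    Matrix.mul_smul, smul_add, smul_sub, smul_smul, Matrix.mul_assoc]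
  module

/-- Solutions of the system (2nd) give, for each spectral parameter `ζ`, a Lax
equation `Z' = [Z_#, Z]` for `Z(ζ) = (A₀+A₁ζ)(B₀+B₁ζ)`. -/
theorem system2nd_implies_lax_Z (n m : ℕ)
    (A₀ A₁ : ℝ → Matrix (Fin n) (Fin m) ℂ) (B₀ B₁ : ℝ → Matrix (Fin m) (Fin n) ℂ)
    (hA₀ : ∀ t, HasDerivAt A₀ ((1 / 2 : ℂ) •
      (A₁ t * B₀ t * A₀ t - A₀ t * B₀ t * A₁ t)) t)
    (hA₁ : ∀ t, HasDerivAt A₁ ((1 / 2 : ℂ) •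
      (A₁ t * B₁ t * A₀ t - A₀ t * B₁ t * A₁ t)) t)
    (hB₀ : ∀ t, HasDerivAt B₀ ((1 / 2 : ℂ) •
      (B₁ t * A₀ t * B₀ t - B₀ t * A₀ t * B₁ t)) t)
    (hB₁ : ∀ t, HasDerivAt B₁ ((1 / 2 : ℂ) •
      (B₁ t * A₁ t * B₀ t - B₀ t * A₁ t * B₁ t)) t) :
    ∀ (ζ : ℂ) (t : ℝ), HasDerivAt
      (fun s => (A₀ s + ζ • A₁ s) * (B₀ s + ζ • B₁ s))
      (((1 / 2 : ℂ) • (A₀ t * B₁ t + A₁ t * B₀ t) + ζ • (A₁ t * B₁ t)) *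
          ((A₀ t + ζ • A₁ t) * (B₀ t + ζ • B₁ t))
        - ((A₀ t + ζ • A₁ t) * (B₀ t + ζ • B₁ t)) *
          ((1 / 2 : ℂ) • (A₀ t * B₁ t + A₁ t * B₀ t) + ζ • (A₁ t * B₁ t))) t := by
  intro ζ t
  rw [← system2nd_leibniz_eq_lax_commutator]
  exact ((hA₀ t).add ((hA₁ t).const_smul ζ)).matrix_mul ((hB₀ t).add ((hB₁ t).const_smul ζ))
end

section
/- Let C : ℝ → sM₁ be a differentiable curve in the odd part of gl_{n|m}(ℂ) satisfying C' = (1/2)[[J(C),C],C] (double superbracket), where J([[0,A],[B,0]]) = [[0,−B*],[A*,0]]. Define α = (1/2)[C, J(C)] and β = (1/2)[C,C], where the superbracket of odd elements is [X,Y] = XY + YX. Then α' = (1/2)[J(β), β] and β' = [α, β] (ordinary commutators of even elements). -/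
open Matrix

attribute [local instance] Matrix.normedAddCommGroup Matrix.normedSpace

/-- `X` lies in the odd part `sM₁` of `gl_{n|m}` (block off-diagonal). -/
def IsOdd {n m : ℕ} (X : Matrix (Fin n ⊕ Fin m) (Fin n ⊕ Fin m) ℂ) : Prop :=
  (∀ i j, X (Sum.inl i) (Sum.inl j) = 0) ∧ (∀ i j, X (Sum.inr i) (Sum.inr j) = 0)

/-- The conjugate-linear quaternionic structure
`J([[U,A],[B,V]]) = [[−U*,−B*],[A*,−V*]]` on `gl_{n|m}(ℂ)`; on the odd part it
is `J([[0,A],[B,0]]) = [[0,−B*],[A*,0]]`. -/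
noncomputable def Jmap {n m : ℕ}
    (X : Matrix (Fin n ⊕ Fin m) (Fin n ⊕ Fin m) ℂ) :
    Matrix (Fin n ⊕ Fin m) (Fin n ⊕ Fin m) ℂ :=
  fun p q => match p, q with
  | Sum.inl i, Sum.inl j => -(starRingEnd ℂ) (X (Sum.inl j) (Sum.inl i))
  | Sum.inl i, Sum.inr j => -(starRingEnd ℂ) (X (Sum.inr j) (Sum.inl i))
  | Sum.inr i, Sum.inl j => (starRingEnd ℂ) (X (Sum.inl j) (Sum.inr i))
  | Sum.inr i, Sum.inr j => -(starRingEnd ℂ) (X (Sum.inr j) (Sum.inr i))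

/-! ### Auxiliary material -/

/-- The block sign matrix `diag(-1, 1)`. -/
noncomputable def gmat (n m : ℕ) : Matrix (Fin n ⊕ Fin m) (Fin n ⊕ Fin m) ℂ :=
  Matrix.diagonal (Sum.elim (fun _ => -1) (fun _ => 1))

section aux
variable {n m : ℕ}

lemma gmat_sq : gmat n m * gmat n m = 1 := by
  rw [gmat, Matrix.diagonal_mul_diagonal]
  ext p q
  rcases eq_or_ne p q with h | h
  · subst h
    cases p <;> simp [Matrix.diagonal_apply_eq, Matrix.one_apply_eq]
  · simp [Matrix.diagonal_apply_ne _ h, Matrix.one_apply_ne h]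

lemma gmat_conjT : (gmat n m)ᴴ = gmat n m := by
  ext p q
  rw [Matrix.conjTranspose_apply, gmat]
  rcases eq_or_ne p q with h | h
  · subst h
    cases p <;> simp [Matrix.diagonal_apply_eq]
  · rw [Matrix.diagonal_apply_ne _ h, Matrix.diagonal_apply_ne _ (Ne.symm h), star_zero]

lemma IsOdd.conjT {X : Matrix (Fin n ⊕ Fin m) (Fin n ⊕ Fin m) ℂ} (h : IsOdd X) :
    IsOdd Xᴴ :=
  ⟨fun i j => by simp [Matrix.conjTranspose_apply, h.1],
   fun i j => by simp [Matrix.conjTranspose_apply, h.2]⟩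

lemma g_anticomm {X : Matrix (Fin n ⊕ Fin m) (Fin n ⊕ Fin m) ℂ} (h : IsOdd X) :
    gmat n m * X = -(X * gmat n m) := by
  ext p q
  rw [gmat, Matrix.diagonal_mul, Matrix.neg_apply, Matrix.mul_diagonal]
  cases p <;> cases q <;> simp [h.1, h.2]

lemma J_odd {X : Matrix (Fin n ⊕ Fin m) (Fin n ⊕ Fin m) ℂ} (h : IsOdd X) :
    Jmap X = gmat n m * Xᴴ := by
  ext p q
  rw [gmat, Matrix.diagonal_mul]
  cases p <;> cases q <;>
    simp [Jmap, Matrix.conjTranspose_apply, h.1, h.2]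

lemma J_sq {X : Matrix (Fin n ⊕ Fin m) (Fin n ⊕ Fin m) ℂ} (h : IsOdd X) :
    Jmap (X * X) = -(Xᴴ * Xᴴ) := by
  ext p q
  cases p <;> cases q <;>
    simp [Jmap, Matrix.mul_apply, Matrix.conjTranspose_apply, map_sum,
      Fintype.sum_sum_type, h.1, h.2, Finset.mul_sum, mul_comm]

lemma hasDerivAt_matrix_s15 {f : ℝ → Matrix (Fin n ⊕ Fin m) (Fin n ⊕ Fin m) ℂ}
    {f' : Matrix (Fin n ⊕ Fin m) (Fin n ⊕ Fin m) ℂ} {t : ℝ}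
    (h : ∀ i j, HasDerivAt (fun s => f s i j) (f' i j) t) : HasDerivAt f f' t :=
  hasDerivAt_pi.2 fun i => hasDerivAt_pi.2 fun j => h i j

lemma HasDerivAt.entry {f : ℝ → Matrix (Fin n ⊕ Fin m) (Fin n ⊕ Fin m) ℂ}
    {f' : Matrix (Fin n ⊕ Fin m) (Fin n ⊕ Fin m) ℂ} {t : ℝ}
    (h : HasDerivAt f f' t) (i j) : HasDerivAt (fun s => f s i j) (f' i j) t :=
  hasDerivAt_pi.1 (hasDerivAt_pi.1 h i) j

lemma HasDerivAt.matMul {f g : ℝ → Matrix (Fin n ⊕ Fin m) (Fin n ⊕ Fin m) ℂ}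
    {f' g' : Matrix (Fin n ⊕ Fin m) (Fin n ⊕ Fin m) ℂ} {t : ℝ}
    (hf : HasDerivAt f f' t) (hg : HasDerivAt g g' t) :
    HasDerivAt (fun s => f s * g s) (f' * g t + f t * g') t := by
  apply hasDerivAt_matrix_s15
  intro i j
  simp only [Matrix.mul_apply, Matrix.add_apply]
  have h2 : HasDerivAt (fun s => ∑ k, f s i k * g s k j)
      (∑ k, (f' i k * g t k j + f t i k * g' k j)) t :=
    HasDerivAt.fun_sum fun k _ => (hf.entry i k).mul (hg.entry k j)
  simpa [Finset.sum_add_distrib] using h2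

lemma HasDerivAt.conjT {f : ℝ → Matrix (Fin n ⊕ Fin m) (Fin n ⊕ Fin m) ℂ}
    {f' : Matrix (Fin n ⊕ Fin m) (Fin n ⊕ Fin m) ℂ} {t : ℝ}
    (h : HasDerivAt f f' t) : HasDerivAt (fun s => (f s)ᴴ) f'ᴴ t := by
  apply hasDerivAt_matrix_s15
  intro i j
  simpa [Matrix.conjTranspose_apply] using (h.entry j i).star

variable {A : Type*} [Ring A] [Algebra ℂ A]

lemma key_beta (c K : A) :
    ((1/2:ℂ) • ((K*c + c*K)*c - c*(K*c + c*K))) * c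
      + c * ((1/2:ℂ) • ((K*c + c*K)*c - c*(K*c + c*K)))
    = ((1/2:ℂ) • (c*K + K*c)) * (c*c) - (c*c) * ((1/2:ℂ) • (c*K + K*c)) := by
  simp only [smul_sub, smul_add, sub_mul, mul_sub, add_mul, mul_add,
    smul_mul_assoc, mul_smul_comm, mul_assoc]
  module

lemma key_alpha (c d g : A) (h1 : g*g = 1) (h2 : g*c = -(c*g)) (h3 : g*d = -(d*g)) :
    ((1/2:ℂ) • (((g*d)*c + c*(g*d))*c - c*((g*d)*c + c*(g*d)))) * (g*d)
      + c * (g * ((1/2:ℂ) • (d*(d*(c*g) + (c*g)*d) - (d*(c*g) + (c*g)*d)*d)))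
      + (g * ((1/2:ℂ) • (d*(d*(c*g) + (c*g)*d) - (d*(c*g) + (c*g)*d)*d))) * c
      + (g*d) * ((1/2:ℂ) • (((g*d)*c + c*(g*d))*c - c*((g*d)*c + c*(g*d))))
    = (-(d*d))*(c*c) - (c*c)*(-(d*d)) := by
  have hgc : ∀ x : A, g*(c*x) = -(c*(g*x)) := fun x => by
    rw [← mul_assoc, h2, neg_mul, mul_assoc]
  have hgd : ∀ x : A, g*(d*x) = -(d*(g*x)) := fun x => by
    rw [← mul_assoc, h3, neg_mul, mul_assoc]
  have hgg : ∀ x : A, g*(g*x) = x := fun x => by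
    rw [← mul_assoc, h1, one_mul]
  simp only [smul_sub, smul_add, sub_mul, mul_sub, add_mul, mul_add,
    smul_mul_assoc, mul_smul_comm, mul_assoc, mul_neg, neg_mul, smul_neg,
    neg_neg, hgc, hgd, hgg, h1, h2, h3, mul_one, one_mul]
  module

end aux

/-- For a solution `C` of `C' = (1/2)[[J(C),C],C]` in the odd part of
`gl_{n|m}(ℂ)`, the even elements `α = (1/2)[C,J(C)] = (1/2)(C·J(C)+J(C)·C)` and
`β = (1/2)[C,C] = C²` satisfy `α' = (1/2)[J(β),β]` and `β' = [α,β]`. -/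
theorem bht_flow_alpha_beta (n m : ℕ)
    (C : ℝ → Matrix (Fin n ⊕ Fin m) (Fin n ⊕ Fin m) ℂ)
    (hodd : ∀ t, IsOdd (C t))
    (hC : ∀ t, HasDerivAt C ((1 / 2 : ℂ) •
      ((Jmap (C t) * C t + C t * Jmap (C t)) * C t
        - C t * (Jmap (C t) * C t + C t * Jmap (C t)))) t) :
    (∀ t, HasDerivAt (fun s => (1 / 2 : ℂ) • (C s * Jmap (C s) + Jmap (C s) * C s))
      ((1 / 2 : ℂ) • (Jmap (C t * C t) * (C t * C t)
        - (C t * C t) * Jmap (C t * C t))) t)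
    ∧ (∀ t, HasDerivAt (fun s => C s * C s)
      (((1 / 2 : ℂ) • (C t * Jmap (C t) + Jmap (C t) * C t)) * (C t * C t)
        - (C t * C t) * ((1 / 2 : ℂ) • (C t * Jmap (C t) + Jmap (C t) * C t))) t) := by
  constructor
  · -- α part
    intro t
    have hD := hC t
    rw [J_odd (hodd t)] at hD
    -- derivative of s ↦ (C s)ᴴ
    have hDh := hD.conjT
    have hDhval : ((1 / 2 : ℂ) •
        ((gmat n m * (C t)ᴴ * C t + C t * (gmat n m * (C t)ᴴ)) * C t
          - C t * (gmat n m * (C t)ᴴ * C t + C t * (gmat n m * (C t)ᴴ))))ᴴ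
        = (1/2:ℂ) • ((C t)ᴴ*((C t)ᴴ*(C t*gmat n m) + (C t*gmat n m)*(C t)ᴴ)
            - ((C t)ᴴ*(C t*gmat n m) + (C t*gmat n m)*(C t)ᴴ)*(C t)ᴴ) := by
      simp only [Matrix.conjTranspose_smul, Matrix.conjTranspose_sub,
        Matrix.conjTranspose_add, Matrix.conjTranspose_mul, gmat_conjT,
        Matrix.conjTranspose_conjTranspose]
      norm_num [mul_add, add_mul, mul_assoc]
    rw [hDhval] at hDh
    -- derivative of s ↦ gmat * (C s)ᴴ  (= Jmap (C s))
    have hK : HasDerivAt (fun s => gmat n m * (C s)ᴴ)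
        (gmat n m * ((1/2:ℂ) • ((C t)ᴴ*((C t)ᴴ*(C t*gmat n m) + (C t*gmat n m)*(C t)ᴴ)
            - ((C t)ᴴ*(C t*gmat n m) + (C t*gmat n m)*(C t)ᴴ)*(C t)ᴴ))) t := by
      simpa using (hasDerivAt_const t (gmat n m)).matMul hDh
    have hfun : (fun s => (1 / 2 : ℂ) • (C s * Jmap (C s) + Jmap (C s) * C s))
        = fun s => (1 / 2 : ℂ) • (C s * (gmat n m * (C s)ᴴ) + (gmat n m * (C s)ᴴ) * C s) := by
      funext s
      rw [J_odd (hodd s)]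
    rw [hfun]
    have hder := ((hD.matMul hK).add (hK.matMul hD)).const_smul ((1 / 2 : ℂ))
    have hvals : (1 / 2 : ℂ) • (Jmap (C t * C t) * (C t * C t)
        - (C t * C t) * Jmap (C t * C t))
        = (1 / 2 : ℂ) •
          ((((1 / 2 : ℂ) •
            ((gmat n m * (C t)ᴴ * C t + C t * (gmat n m * (C t)ᴴ)) * C t
              - C t * (gmat n m * (C t)ᴴ * C t + C t * (gmat n m * (C t)ᴴ)))) * (gmat n m * (C t)ᴴ)
            + C t * (gmat n m * ((1/2:ℂ) • ((C t)ᴴ*((C t)ᴴ*(C t*gmat n m) + (C t*gmat n m)*(C t)ᴴ)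
                - ((C t)ᴴ*(C t*gmat n m) + (C t*gmat n m)*(C t)ᴴ)*(C t)ᴴ))))
          + ((gmat n m * ((1/2:ℂ) • ((C t)ᴴ*((C t)ᴴ*(C t*gmat n m) + (C t*gmat n m)*(C t)ᴴ)
                - ((C t)ᴴ*(C t*gmat n m) + (C t*gmat n m)*(C t)ᴴ)*(C t)ᴴ))) * C t
            + (gmat n m * (C t)ᴴ) * ((1 / 2 : ℂ) •
              ((gmat n m * (C t)ᴴ * C t + C t * (gmat n m * (C t)ᴴ)) * C t
                - C t * (gmat n m * (C t)ᴴ * C t + C t * (gmat n m * (C t)ᴴ)))))) := by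
      rw [J_sq (hodd t)]
      congr 1
      rw [← key_alpha (C t) (C t)ᴴ (gmat n m) gmat_sq (g_anticomm (hodd t))
        (g_anticomm (hodd t).conjT)]
      norm_num [mul_assoc]
      abel
    rw [hvals]
    exact hder
  · -- β part
    intro t
    have hD := hC t
    have hder := hD.matMul hD
    have hval : ((1 / 2 : ℂ) •
        ((Jmap (C t) * C t + C t * Jmap (C t)) * C t
          - C t * (Jmap (C t) * C t + C t * Jmap (C t)))) * C t
        + C t * ((1 / 2 : ℂ) •
        ((Jmap (C t) * C t + C t * Jmap (C t)) * C t
          - C t * (Jmap (C t) * C t + C t * Jmap (C t))))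
        = ((1 / 2 : ℂ) • (C t * Jmap (C t) + Jmap (C t) * C t)) * (C t * C t)
          - (C t * C t) * ((1 / 2 : ℂ) • (C t * Jmap (C t) + Jmap (C t) * C t)) := by
      have h := key_beta (C t) (Jmap (C t))
      norm_num at h ⊢
      exact h
    rw [← hval]
    exact hder
end

section
/- Let (V,[·,·,·]) be a complex anti-Lie triple system and J a quaternionic automorphism (conjugate-linear, J² = −1, J[x,y,z] = [Jx,Jy,Jz]). Suppose C : ℝ → V is differentiable and satisfies C' = (1/2)[J(C), C, C]. Then in the associated Lie superalgebra L(V) = D(V) ⊕ V, the elements α = (1/2)[C, J(C)] and β = (1/2)[C, C] (superbrackets, taking values in D(V) = span of left multiplications) satisfy α' = (1/2)[J(β), β] and β' = [α, β]. -/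
/-- An anti-Lie triple system: a module with a trilinear product satisfying
symmetry in the first two arguments, the cyclic identity, and the derivation
identity. -/
structure AntiLieTripleSystem (K V : Type*) [CommRing K]
    [AddCommGroup V] [Module K V] where
  t : V →ₗ[K] V →ₗ[K] V →ₗ[K] V
  symm : ∀ x y z, t x y z = t y x z
  cyclic : ∀ x y z, t x y z + t z x y + t y z x = 0
  leibniz : ∀ u v x y z,
    t u v (t x y z) = t (t u v x) y z + t x (t u v y) z + t x y (t u v z)

/-!
Write `a = C t` and `b = J a`. The flow gives `C' = ½[b,a,a]`, and since `J` is a conjugate-linear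
automorphism with `J² = -1`, `(J C)' = J(C') = -½[a,b,b]`. Differentiating `α = ½L(C, J C)` and
`β = ½L(C, C)` by the product rule therefore leaves identities between operators of the form
`L([a,a,b], ·)`, and these follow from the anti-Lie triple identities alone: the derivation identity
says that `[L(u,v), L(x,y)] = L(L(u,v)x, y) + L(x, L(u,v)y)`, while symmetry and the cyclic identity
give `[b,a,a] = -½[a,a,b]` and `[a,a,a] = 0`.
-/

section Calculus

variable {E F G : Type*} [NormedAddCommGroup E] [NormedSpace ℂ E] [FiniteDimensional ℂ E]
  [NormedAddCommGroup F] [NormedSpace ℂ F] [NormedAddCommGroup G] [NormedSpace ℂ G]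
  {u : ℝ → E} {v : ℝ → F} {u' : E} {v' : F} {x : ℝ}

theorem LinearMap.hasDerivAt_bilinear [FiniteDimensional ℂ F] (B : E →ₗ[ℂ] F →ₗ[ℂ] G)
    (hu : HasDerivAt u u' x) (hv : HasDerivAt v v' x) :
    HasDerivAt (fun s => B (u s) (v s)) (B u' (v x) + B (u x) v') x := by
  let Bc : E →L[ℂ] F →L[ℂ] G :=
    LinearMap.toContinuousLinearMap (LinearMap.toContinuousLinearMap.toLinearMap ∘ₗ B)
  rw [add_comm]
  exact (Bc.bilinearRestrictScalars ℝ).hasDerivAt_of_bilinear (fun _ => hu) (fun _ => hv)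

theorem LinearMap.hasDerivAt_conjLinear (J : E →ₗ⋆[ℂ] F) (hu : HasDerivAt u u' x) :
    HasDerivAt (fun s => J (u s)) (J u') x := by
  let Jℝ : E →ₗ[ℝ] F :=
    { toFun := J
      map_add' := J.map_add
      map_smul' := fun r y => by
        simpa [Complex.coe_smul] using J.map_smulₛₗ (r : ℂ) y }
  exact (LinearMap.toContinuousLinearMap Jℝ).hasFDerivAt.comp_hasDerivAt x hu

end Calculus

namespace AntiLieTripleSystem

section CommRing

variable {K V : Type*} [CommRing K] [AddCommGroup V] [Module K V] (T : AntiLieTripleSystem K V)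

theorem t_commutator (u v x y w : V) :
    T.t u v (T.t x y w) - T.t x y (T.t u v w) = T.t (T.t u v x) y w + T.t x (T.t u v y) w := by
  rw [T.leibniz]
  abel

theorem t_commutator_self_self (a b w : V) :
    T.t a a (T.t b b w) - T.t b b (T.t a a w) = (2 : K) • T.t (T.t a a b) b w := by
  linear_combination (norm := module) T.t_commutator a a b b w + T.symm b (T.t a a b) w

end CommRing

variable {K V : Type*} [Field K] [CharZero K] [AddCommGroup V] [Module K V]
  (T : AntiLieTripleSystem K V)

theorem t_self_self_self (a : V) : T.t a a a = 0 := by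
  linear_combination (norm := module) (1 / 3 : K) • T.cyclic a a a

theorem t_eq_neg_half_t_self_self (a b : V) : T.t b a a = -(1 / 2 : K) • T.t a a b := by
  linear_combination (norm := module) (1 / 2 : K) • T.cyclic a a b - (1 / 2 : K) • T.symm a b a

/-- Antisymmetry of the commutator `[L(a,a), L(b,b)]`. -/
theorem t_t_self_self_add_swap (a b w : V) :
    T.t (T.t a a b) b w + T.t (T.t b b a) a w = 0 := by
  linear_combination (norm := module)
    -(1 / 2 : K) • T.t_commutator_self_self a b w - (1 / 2 : K) • T.t_commutator_self_self b a w

theorem half_t_deriv_eq_half_commutator_self_self (a b w : V) :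
    (1 / 2 : K) • (T.t ((1 / 2 : K) • T.t b a a) b w + T.t a (-(1 / 2 : K) • T.t a b b) w)
      = (1 / 2 : K) • ((1 / 2 : K) • T.t b b ((1 / 2 : K) • T.t a a w)
          - (1 / 2 : K) • T.t a a ((1 / 2 : K) • T.t b b w)) := by
  simp only [map_smul, LinearMap.smul_apply, T.t_eq_neg_half_t_self_self a b,
    T.t_eq_neg_half_t_self_self b a]
  linear_combination (norm := module)
    (1 / 8 : K) • (T.t_commutator_self_self a b w + T.symm a (T.t b b a) w
      + T.t_t_self_self_add_swap a b w)

theorem half_t_deriv_eq_commutator_half_t (a b w : V) :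
    (1 / 2 : K) • (T.t ((1 / 2 : K) • T.t b a a) a w + T.t a ((1 / 2 : K) • T.t b a a) w)
      = (1 / 2 : K) • T.t a b ((1 / 2 : K) • T.t a a w)
        - (1 / 2 : K) • T.t a a ((1 / 2 : K) • T.t a b w) := by
  have hcomm := T.t_commutator a a a b w
  rw [T.t_self_self_self, map_zero, LinearMap.zero_apply, LinearMap.zero_apply, zero_add] at hcomm
  simp only [map_smul, LinearMap.smul_apply, T.t_eq_neg_half_t_self_self a b]
  linear_combination (norm := module) (1 / 4 : K) • hcomm + (1 / 8 : K) • T.symm a (T.t a a b) w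

end AntiLieTripleSystem

/-- For a complex anti-Lie triple system `(V,[·,·,·])` with a quaternionic
automorphism `J` and a solution `C` of `C' = (1/2)[J(C),C,C]`, the elements
`α = (1/2)[C,J(C)] = (1/2)L(C,J(C))` and `β = (1/2)[C,C] = (1/2)L(C,C)` of the
even part `D(V)` of the associated Lie superalgebra `L(V)` satisfy
`α' = (1/2)[J(β),β]` and `β' = [α,β]`, where `J(L(x,y)) = L(Jx,Jy)`.  The
equations are stated applied to an arbitrary vector `w ∈ V`. -/
theorem alts_flow_alpha_beta (V : Type*) [NormedAddCommGroup V]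
    [NormedSpace ℂ V] [FiniteDimensional ℂ V]
    (T : AntiLieTripleSystem ℂ V) (J : V → V)
    (hJadd : ∀ x y, J (x + y) = J x + J y)
    (hJsmul : ∀ (c : ℂ) (x : V), J (c • x) = (starRingEnd ℂ) c • J x)
    (hJ2 : ∀ x, J (J x) = -x)
    (hJt : ∀ x y z, J (T.t x y z) = T.t (J x) (J y) (J z))
    (C : ℝ → V)
    (hC : ∀ t, HasDerivAt C ((1 / 2 : ℂ) • T.t (J (C t)) (C t) (C t)) t) :
    (∀ (w : V) (t : ℝ), HasDerivAt
      (fun s => (1 / 2 : ℂ) • T.t (C s) (J (C s)) w)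
      ((1 / 2 : ℂ) • ((1 / 2 : ℂ) • T.t (J (C t)) (J (C t))
            ((1 / 2 : ℂ) • T.t (C t) (C t) w)
          - (1 / 2 : ℂ) • T.t (C t) (C t)
            ((1 / 2 : ℂ) • T.t (J (C t)) (J (C t)) w))) t)
    ∧ (∀ (w : V) (t : ℝ), HasDerivAt
      (fun s => (1 / 2 : ℂ) • T.t (C s) (C s) w)
      ((1 / 2 : ℂ) • T.t (C t) (J (C t)) ((1 / 2 : ℂ) • T.t (C t) (C t) w)
        - (1 / 2 : ℂ) • T.t (C t) (C t)
          ((1 / 2 : ℂ) • T.t (C t) (J (C t)) w)) t) := by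
  let Jₛₗ : V →ₗ⋆[ℂ] V := { toFun := J, map_add' := hJadd, map_smul' := hJsmul }
  have hJC : ∀ t, HasDerivAt (fun s => J (C s)) (-(1 / 2 : ℂ) • T.t (C t) (J (C t)) (J (C t))) t := by
    intro t
    refine (Jₛₗ.hasDerivAt_conjLinear (hC t)).congr_deriv ?_
    show J _ = _
    simp [hJsmul, hJt, hJ2, map_ofNat]
  let B (w : V) : V →ₗ[ℂ] V →ₗ[ℂ] V := T.t.compr₂ (LinearMap.applyₗ w)
  refine ⟨fun w t => ?_, fun w t => ?_⟩
  · exact (((B w).hasDerivAt_bilinear (hC t) (hJC t)).const_smul (1 / 2 : ℂ)).congr_deriv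
      (T.half_t_deriv_eq_half_commutator_self_self (C t) (J (C t)) w)
  · exact (((B w).hasDerivAt_bilinear (hC t) (hC t)).const_smul (1 / 2 : ℂ)).congr_deriv
      (T.half_t_deriv_eq_commutator_half_t (C t) (J (C t)) w)
end
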